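/- Let μ, λ ≥ 0 with λ + μ > 1 and |λ − μ| ≥ √(λ+μ), and suppose X, X' ~ Poisson(μ) and Y, Y' ~ Poisson(λ) are mutually independent. Then Δ := E[|X−Y| + |X'−Y'| − |X−X'| − |Y−Y'|] ≥ (1/5)·|λ−μ|. -/

import Mathlib

open MeasureTheory ProbabilityTheory

/-- The Poisson distribution with mean `m ≥ 0`, as a measure on `ℝ` supported on `ℕ`. -/
noncomputable def poissonRealMeasure (m : ℝ) : Measure ℝ :=
  Measure.sum fun k : ℕ =>
    ENNReal.ofReal (Real.exp (-m) * m ^ k / (Nat.factorial k : ℝ)) • Measure.dirac (k : ℝ)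

/-!
Write `m = μ`, `l = λ`, and let `F`, `G` be the Poisson(m), Poisson(l) CDFs on `ℕ`. Counting
`|j - k|` as the number of `t` with `j ≤ t < k` or `k ≤ t < j` and using independence gives
`E|X - Y| = ∑ₜ (F t (1 - G t) + G t (1 - F t))`, hence `Δ = 2 ∑ₜ (F t - G t)²`. Since `∑ₜ (1 - F t)`
is the mean, `H = F - G` sums to `l - m`. Assume `m ≤ l` and put `σ² = l + m`. The fourth central
moment `m + 3m²` (from Stein's identity) bounds the mass of `|H|` outside the window
`[m - 2σ, l + 2σ]` by `σ / 8 ≤ (l - m) / 8`, and the window has length at most `7 (l - m)`, so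
Cauchy–Schwarz on it gives `∑ H² ≥ (7/8)² (l - m) / 7 ≥ (l - m) / 10`.
-/

open Finset
open scoped ENNReal

namespace PoissonGap

section Counting

lemma tsum_ite_mem_eq_card (s : Finset ℕ) :
    ∑' t : ℕ, (if t ∈ s then (1 : ℝ≥0∞) else 0) = s.card := by
  rw [tsum_eq_sum (s := s) fun t ht => if_neg ht, Finset.sum_ite_mem, Finset.inter_self,
    Finset.sum_const, nsmul_one]

lemma ofReal_abs_natCast_sub (j k : ℕ) :
    ENNReal.ofReal |(j : ℝ) - k| =
      ∑' t : ℕ, ((if j ≤ t ∧ t < k then 1 else 0) + (if k ≤ t ∧ t < j then 1 else 0)) := by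
  simp_rw [← Finset.mem_Ico]
  rw [ENNReal.tsum_add, tsum_ite_mem_eq_card, tsum_ite_mem_eq_card, Nat.card_Ico, Nat.card_Ico]
  rcases le_total j k with h | h
  · rw [abs_of_nonpos (sub_nonpos.2 (Nat.cast_le.2 h)), Nat.sub_eq_zero_of_le h, Nat.cast_zero,
      add_zero, neg_sub, ← Nat.cast_sub h, ENNReal.ofReal_natCast]
  · rw [abs_of_nonneg (sub_nonneg.2 (Nat.cast_le.2 h)), Nat.sub_eq_zero_of_le h, Nat.cast_zero,
      zero_add, ← Nat.cast_sub h, ENNReal.ofReal_natCast]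

variable {Ω : Type*} [MeasurableSpace Ω] {μ : Measure Ω}

lemma lintegral_abs_sub_eq_tsum {X Y : Ω → ℝ} (hX : Measurable X) (hY : Measurable Y)
    (hXY : IndepFun X Y μ) (hXℕ : ∀ᵐ ω ∂μ, ∃ j : ℕ, X ω = j) (hYℕ : ∀ᵐ ω ∂μ, ∃ k : ℕ, Y ω = k) :
    ∫⁻ ω, ENNReal.ofReal |X ω - Y ω| ∂μ = ∑' t : ℕ,
      (μ (X ⁻¹' Set.Iic t) * μ (Y ⁻¹' Set.Ioi t) + μ (Y ⁻¹' Set.Iic t) * μ (X ⁻¹' Set.Ioi t)) := by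
  classical
  set A : ℕ → Set Ω := fun t => X ⁻¹' Set.Iic t ∩ Y ⁻¹' Set.Ioi t
  set A' : ℕ → Set Ω := fun t => Y ⁻¹' Set.Iic t ∩ X ⁻¹' Set.Ioi t
  have hA (t : ℕ) : MeasurableSet (A t) := (hX measurableSet_Iic).inter (hY measurableSet_Ioi)
  have hA' (t : ℕ) : MeasurableSet (A' t) := (hY measurableSet_Iic).inter (hX measurableSet_Ioi)
  have hcount : ∀ᵐ ω ∂μ, ENNReal.ofReal |X ω - Y ω| =
      ∑' t : ℕ, ((A t).indicator 1 ω + (A' t).indicator 1 ω) := by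
    filter_upwards [hXℕ, hYℕ] with ω ⟨j, hj⟩ ⟨k, hk⟩
    simp only [A, A', Set.indicator_apply, Set.mem_inter_iff, Set.mem_preimage, Set.mem_Iic,
      Set.mem_Ioi, hj, hk, Nat.cast_le, Nat.cast_lt, Pi.one_apply]
    exact ofReal_abs_natCast_sub j k
  rw [lintegral_congr_ae hcount,
    lintegral_tsum (f := fun t ω => (A t).indicator 1 ω + (A' t).indicator 1 ω) fun t =>
      ((measurable_one.indicator (hA t)).add (measurable_one.indicator (hA' t))).aemeasurable]
  congr 1 with t
  rw [lintegral_add_left (measurable_one.indicator (hA t)), lintegral_indicator_one (hA t),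
    lintegral_indicator_one (hA' t),
    hXY.measure_inter_preimage_eq_mul _ _ measurableSet_Iic measurableSet_Ioi,
    hXY.symm.measure_inter_preimage_eq_mul _ _ measurableSet_Iic measurableSet_Ioi]

end Counting

section NatCDF

variable {p : ℕ → ℝ}

def natCDF (p : ℕ → ℝ) (t : ℕ) : ℝ := ∑ j ∈ range (t + 1), p j

lemma natCDF_nonneg (hp : ∀ j, 0 ≤ p j) (t : ℕ) : 0 ≤ natCDF p t :=
  sum_nonneg fun j _ => hp j

lemma natCDF_le_one (hp : ∀ j, 0 ≤ p j) (hp1 : HasSum p 1) (t : ℕ) : natCDF p t ≤ 1 :=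
  sum_le_hasSum _ (fun j _ => hp j) hp1

lemma tsum_ite_le_ofReal (hp : ∀ j, 0 ≤ p j) (t : ℕ) :
    ∑' j : ℕ, (if j ≤ t then ENNReal.ofReal (p j) else 0) = ENNReal.ofReal (natCDF p t) := by
  rw [tsum_eq_sum (s := range (t + 1)) fun j hj => if_neg (by simpa [Nat.lt_succ_iff] using hj),
    natCDF, ENNReal.ofReal_sum_of_nonneg fun j _ => hp j]
  exact sum_congr rfl fun j hj => if_pos (Nat.lt_succ_iff.1 (mem_range.1 hj))

lemma tsum_ite_lt_ofReal (hp : ∀ j, 0 ≤ p j) (hp1 : HasSum p 1) (t : ℕ) :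
    ∑' j : ℕ, (if t < j then ENNReal.ofReal (p j) else 0) = ENNReal.ofReal (1 - natCDF p t) := by
  have hsplit : ENNReal.ofReal 1 =
      ENNReal.ofReal (natCDF p t) + ∑' j : ℕ, (if t < j then ENNReal.ofReal (p j) else 0) := by
    rw [← hp1.tsum_eq, ENNReal.ofReal_tsum_of_nonneg hp hp1.summable, ← tsum_ite_le_ofReal hp,
      ← ENNReal.tsum_add]
    congr 1 with j
    by_cases h : j ≤ t <;> simp [h, not_lt.2, lt_of_not_ge]
  rw [ENNReal.ofReal_sub _ (natCDF_nonneg hp t), hsplit,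
    ENNReal.add_sub_cancel_left ENNReal.ofReal_ne_top]

lemma tsum_ofReal_one_sub_natCDF_add (hp : ∀ j, 0 ≤ p j) (hp1 : HasSum p 1) (n : ℕ) :
    ∑' k : ℕ, ENNReal.ofReal (1 - natCDF p (k + n)) =
      ∑' j : ℕ, ENNReal.ofReal (p j) * (j - n : ℕ) := by
  simp_rw [← tsum_ite_lt_ofReal hp hp1]
  rw [ENNReal.tsum_comm]
  congr 1 with j
  rw [← card_range (j - n), ← tsum_ite_mem_eq_card, ← ENNReal.tsum_mul_left]
  congr 1 with k
  simp only [mem_range, Nat.lt_sub_iff_add_lt, mul_ite, mul_one, mul_zero]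

lemma hasSum_of_tsum_ofReal_eq {f : ℕ → ℝ} {c : ℝ} (hf : ∀ t, 0 ≤ f t) (hc : 0 ≤ c)
    (h : ∑' t, ENNReal.ofReal (f t) = ENNReal.ofReal c) : HasSum f c := by
  have hs : Summable f := (ENNReal.summable_toReal (h ▸ ENNReal.ofReal_ne_top)).congr
    fun t => ENNReal.toReal_ofReal (hf t)
  rw [← ENNReal.ofReal_tsum_of_nonneg hf hs, ENNReal.ofReal_eq_ofReal_iff (tsum_nonneg hf) hc] at h
  exact h ▸ hs.hasSum

lemma hasSum_one_sub_natCDF (hp : ∀ j, 0 ≤ p j) (hp1 : HasSum p 1) {c : ℝ}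
    (hc : HasSum (fun j => p j * j) c) : HasSum (fun t => 1 - natCDF p t) c := by
  have hnonneg (j : ℕ) : 0 ≤ p j * j := mul_nonneg (hp j) j.cast_nonneg
  refine hasSum_of_tsum_ofReal_eq (fun t => sub_nonneg.2 (natCDF_le_one hp hp1 t))
    (hc.nonneg hnonneg) ?_
  have h := tsum_ofReal_one_sub_natCDF_add hp hp1 0
  simp only [add_zero, Nat.sub_zero] at h
  rw [h, ← hc.tsum_eq, ENNReal.ofReal_tsum_of_nonneg hnonneg hc.summable]
  congr 1 with j
  rw [ENNReal.ofReal_mul (hp j), ENNReal.ofReal_natCast]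

lemma sum_range_natCDF (n : ℕ) :
    ∑ t ∈ range n, natCDF p t = ∑ j ∈ range n, p j * ((n : ℝ) - j) := by
  induction n with
  | zero => simp
  | succ n ih =>
    rw [sum_range_succ, ih, natCDF, sum_range_succ _ n, sum_range_succ (fun j => p j * _),
      Nat.cast_succ]
    simp only [add_sub_right_comm (n : ℝ) 1, mul_add, mul_one, sum_add_distrib]
    ring

-- AM–GM for `y = (y - a) + a/3 + a/3 + a/3`.
lemma sub_le_pow_four_div {a : ℝ} (ha : 0 < a) (y : ℝ) :
    y - a ≤ 27 * y ^ 4 / (256 * a ^ 3) := by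
  rw [le_div_iff₀ (by positivity)]
  have key : 27 * y ^ 4 - (y - a) * (256 * a ^ 3) =
      (3 * y - 4 * a) ^ 2 * (3 * y ^ 2 + 8 * a * y + 16 * a ^ 2) := by ring
  nlinarith [mul_nonneg (sq_nonneg (3 * y - 4 * a))
    (show 0 ≤ 3 * y ^ 2 + 8 * a * y + 16 * a ^ 2 by nlinarith [sq_nonneg (3 * y + 4 * a)])]

variable {c M a : ℝ}

lemma sum_range_natCDF_le (hp : ∀ j, 0 ≤ p j) (hM : HasSum (fun j => p j * ((j : ℝ) - c) ^ 4) M)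
    (ha : 0 < a) {n : ℕ} (hn : (n : ℝ) + a ≤ c) :
    ∑ t ∈ range n, natCDF p t ≤ 27 * M / (256 * a ^ 3) := by
  have hpt (j : ℕ) : p j * ((n : ℝ) - j) ≤ p j * ((j - c) ^ 4 * (27 / (256 * a ^ 3))) := by
    refine mul_le_mul_of_nonneg_left ?_ (hp j)
    have h := sub_le_pow_four_div ha (c - j)
    rw [show 27 * (c - j) ^ 4 / (256 * a ^ 3) = (j - c) ^ 4 * (27 / (256 * a ^ 3)) by ring] at h
    linarith
  calc ∑ t ∈ range n, natCDF p t = ∑ j ∈ range n, p j * ((n : ℝ) - j) := sum_range_natCDF n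
    _ ≤ ∑ j ∈ range n, p j * ((j - c) ^ 4 * (27 / (256 * a ^ 3))) := sum_le_sum fun j _ => hpt j
    _ ≤ M * (27 / (256 * a ^ 3)) :=
      sum_le_hasSum _ (fun j _ => mul_nonneg (hp j) (by positivity))
        (by simpa only [mul_assoc] using hM.mul_right (27 / (256 * a ^ 3)))
    _ = 27 * M / (256 * a ^ 3) := by ring

lemma tsum_one_sub_natCDF_add_le (hp : ∀ j, 0 ≤ p j) (hp1 : HasSum p 1)
    (hM : HasSum (fun j => p j * ((j : ℝ) - c) ^ 4) M) (ha : 0 < a) {n : ℕ} (hn : c + a ≤ n) :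
    ∑' k : ℕ, (1 - natCDF p (k + n)) ≤ 27 * M / (256 * a ^ 3) := by
  have hpt (j : ℕ) : ((j - n : ℕ) : ℝ) ≤ (j - c) ^ 4 * (27 / (256 * a ^ 3)) := by
    rcases le_total n j with h | h
    · have h' := sub_le_pow_four_div ha (j - c)
      rw [Nat.cast_sub h]
      linarith [show 27 * (j - c) ^ 4 / (256 * a ^ 3) = (j - c) ^ 4 * (27 / (256 * a ^ 3)) by ring]
    · rw [Nat.sub_eq_zero_of_le h, Nat.cast_zero]
      positivity
  have hM' : HasSum (fun j => p j * ((j - c) ^ 4 * (27 / (256 * a ^ 3))))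
      (27 * M / (256 * a ^ 3)) := by
    rw [mul_comm 27 M, mul_div_assoc]
    simpa only [mul_assoc] using hM.mul_right (27 / (256 * a ^ 3))
  have hE : ∑' k : ℕ, ENNReal.ofReal (1 - natCDF p (k + n)) ≤
      ENNReal.ofReal (27 * M / (256 * a ^ 3)) := by
    rw [tsum_ofReal_one_sub_natCDF_add hp hp1, ← hM'.tsum_eq,
      ENNReal.ofReal_tsum_of_nonneg (fun j => mul_nonneg (hp j) (by positivity)) hM'.summable]
    refine ENNReal.tsum_le_tsum fun j => ?_
    rw [← ENNReal.ofReal_natCast, ← ENNReal.ofReal_mul (hp j)]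
    exact ENNReal.ofReal_le_ofReal (mul_le_mul_of_nonneg_left (hpt j) (hp j))
  calc ∑' k : ℕ, (1 - natCDF p (k + n))
      = (∑' k : ℕ, ENNReal.ofReal (1 - natCDF p (k + n))).toReal := by
        rw [ENNReal.tsum_toReal_eq fun _ => ENNReal.ofReal_ne_top]
        congr 1 with k
        rw [ENNReal.toReal_ofReal (sub_nonneg.2 (natCDF_le_one hp hp1 _))]
    _ ≤ 27 * M / (256 * a ^ 3) :=
      ENNReal.toReal_le_of_le_ofReal (hM'.nonneg fun j => mul_nonneg (hp j) (by positivity)) hE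

end NatCDF

section PoissonMoments

noncomputable def poissonProb (m : ℝ) (k : ℕ) : ℝ := Real.exp (-m) * m ^ k / (Nat.factorial k : ℝ)

variable {m : ℝ}

lemma poissonProb_nonneg (hm : 0 ≤ m) (k : ℕ) : 0 ≤ poissonProb m k := by
  unfold poissonProb; positivity

lemma hasSum_poissonProb (hm : 0 ≤ m) : HasSum (poissonProb m) 1 :=
  hasSum_one_poissonMeasure ⟨m, hm⟩

lemma poissonProb_succ_mul (m : ℝ) (k : ℕ) :
    poissonProb m (k + 1) * (k + 1) = m * poissonProb m k := by
  simp only [poissonProb, Nat.factorial_succ, Nat.cast_mul, pow_succ]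
  field_simp
  push_cast
  ring

-- Stein's identity `E[X g(X)] = m E[g(X + 1)]`.
lemma hasSum_poissonProb_mul_natCast_mul {g : ℕ → ℝ} {A : ℝ}
    (h : HasSum (fun k => poissonProb m k * g (k + 1)) A) :
    HasSum (fun k => poissonProb m k * (k * g k)) (m * A) := by
  refine (hasSum_nat_add_iff' 1).1 ?_
  simpa [← mul_assoc, ← poissonProb_succ_mul] using h.mul_left m

lemma hasSum_poissonProb_mul_sub_pow_succ {r : ℕ} {A B : ℝ}
    (hA : HasSum (fun k => poissonProb m k * ((k : ℝ) + 1 - m) ^ r) A)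
    (hB : HasSum (fun k => poissonProb m k * ((k : ℝ) - m) ^ r) B) :
    HasSum (fun k => poissonProb m k * ((k : ℝ) - m) ^ (r + 1)) (m * (A - B)) := by
  have hstein := hasSum_poissonProb_mul_natCast_mul (g := fun k => ((k : ℝ) - m) ^ r)
    (hA.congr_fun fun k => by push_cast; ring)
  rw [mul_sub]
  exact (hstein.sub (hB.mul_left m)).congr_fun fun k => by ring

lemma hasSum_poissonProb_mul_natCast (hm : 0 ≤ m) :
    HasSum (fun k => poissonProb m k * k) m := by
  simpa using hasSum_poissonProb_mul_natCast_mul (g := fun _ => 1)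
    ((hasSum_poissonProb hm).congr_fun fun k => mul_one _)

lemma hasSum_poissonProb_mul_sub_pow_four (hm : 0 ≤ m) :
    HasSum (fun k => poissonProb m k * ((k : ℝ) - m) ^ 4) (m + 3 * m ^ 2) := by
  have c0 : HasSum (fun k => poissonProb m k * ((k : ℝ) - m) ^ 0) 1 := by
    simpa using hasSum_poissonProb hm
  have c1 : HasSum (fun k => poissonProb m k * ((k : ℝ) - m) ^ 1) 0 := by
    simpa using hasSum_poissonProb_mul_sub_pow_succ (c0.congr_fun fun k => by ring) c0
  have c2 : HasSum (fun k => poissonProb m k * ((k : ℝ) - m) ^ 2) m := by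
    simpa using hasSum_poissonProb_mul_sub_pow_succ ((c1.add c0).congr_fun fun k => by ring) c1
  have c3 : HasSum (fun k => poissonProb m k * ((k : ℝ) - m) ^ 3) m := by
    convert hasSum_poissonProb_mul_sub_pow_succ
      ((c2.add ((c1.mul_left 2).add c0)).congr_fun fun k => by ring) c2 using 1
    ring
  convert hasSum_poissonProb_mul_sub_pow_succ
    ((c3.add ((c2.mul_left 3).add ((c1.mul_left 3).add c0))).congr_fun fun k => by ring) c3 using 1
  ring

end PoissonMoments

section PoissonLaw

noncomputable abbrev poissonCDF (m : ℝ) : ℕ → ℝ := natCDF (poissonProb m)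

variable {m l : ℝ}

lemma hasSum_one_sub_poissonCDF (hm : 0 ≤ m) :
    HasSum (fun t => 1 - poissonCDF m t) m :=
  hasSum_one_sub_natCDF (poissonProb_nonneg hm) (hasSum_poissonProb hm)
    (hasSum_poissonProb_mul_natCast hm)

lemma poissonCDF_nonneg (hm : 0 ≤ m) (t : ℕ) : 0 ≤ poissonCDF m t :=
  natCDF_nonneg (poissonProb_nonneg hm) t

lemma poissonCDF_le_one (hm : 0 ≤ m) (t : ℕ) : poissonCDF m t ≤ 1 :=
  natCDF_le_one (poissonProb_nonneg hm) (hasSum_poissonProb hm) t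

lemma poissonRealMeasure_Iic (hm : 0 ≤ m) (t : ℕ) :
    poissonRealMeasure m (Set.Iic (t : ℝ)) = ENNReal.ofReal (poissonCDF m t) := by
  rw [← tsum_ite_le_ofReal (poissonProb_nonneg hm), poissonRealMeasure,
    Measure.sum_apply _ measurableSet_Iic]
  congr 1 with k
  simp [Set.indicator, poissonProb]

lemma poissonRealMeasure_Ioi (hm : 0 ≤ m) (t : ℕ) :
    poissonRealMeasure m (Set.Ioi (t : ℝ)) = ENNReal.ofReal (1 - poissonCDF m t) := by
  rw [← tsum_ite_lt_ofReal (poissonProb_nonneg hm) (hasSum_poissonProb hm), poissonRealMeasure,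
    Measure.sum_apply _ measurableSet_Ioi]
  congr 1 with k
  simp [Set.indicator, poissonProb]

lemma ae_poissonRealMeasure_natCast : ∀ᵐ x ∂poissonRealMeasure m, ∃ j : ℕ, x = (j : ℝ) := by
  rw [poissonRealMeasure, Measure.ae_sum_iff]
  intro k
  refine Measure.ae_smul_measure ?_ _
  rw [ae_dirac_eq]
  exact Filter.eventually_pure.2 ⟨k, rfl⟩

variable {Ω : Type*} [MeasurableSpace Ω] {μ : Measure Ω} {X Y : Ω → ℝ}

lemma lintegral_abs_sub_of_poisson (hm : 0 ≤ m) (hl : 0 ≤ l) (hX : Measurable X) (hY : Measurable Y)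
    (hXY : IndepFun X Y μ) (hXlaw : μ.map X = poissonRealMeasure m)
    (hYlaw : μ.map Y = poissonRealMeasure l) :
    ∫⁻ ω, ENNReal.ofReal |X ω - Y ω| ∂μ = ∑' t : ℕ, ENNReal.ofReal
      (poissonCDF m t * (1 - poissonCDF l t) +
        poissonCDF l t * (1 - poissonCDF m t)) := by
  have hnat {Z : Ω → ℝ} {r : ℝ} (hZ : Measurable Z) (hlaw : μ.map Z = poissonRealMeasure r) :
      ∀ᵐ ω ∂μ, ∃ j : ℕ, Z ω = j :=
    ae_of_ae_map hZ.aemeasurable (hlaw ▸ ae_poissonRealMeasure_natCast)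
  have hpre {Z : Ω → ℝ} {r : ℝ} (hZ : Measurable Z) (hlaw : μ.map Z = poissonRealMeasure r)
      {s : Set ℝ} (hs : MeasurableSet s) : μ (Z ⁻¹' s) = poissonRealMeasure r s := by
    rw [← hlaw, Measure.map_apply hZ hs]
  rw [lintegral_abs_sub_eq_tsum hX hY hXY (hnat hX hXlaw) (hnat hY hYlaw)]
  congr 1 with t
  rw [hpre hX hXlaw measurableSet_Iic, hpre hX hXlaw measurableSet_Ioi,
    hpre hY hYlaw measurableSet_Iic, hpre hY hYlaw measurableSet_Ioi, poissonRealMeasure_Iic hm,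
    poissonRealMeasure_Ioi hm, poissonRealMeasure_Iic hl, poissonRealMeasure_Ioi hl,
    ← ENNReal.ofReal_mul (poissonCDF_nonneg hm t),
    ← ENNReal.ofReal_mul (poissonCDF_nonneg hl t), ← ENNReal.ofReal_add
      (mul_nonneg (poissonCDF_nonneg hm t) (sub_nonneg.2 (poissonCDF_le_one hl t)))
      (mul_nonneg (poissonCDF_nonneg hl t) (sub_nonneg.2 (poissonCDF_le_one hm t)))]

lemma integrable_abs_sub_and_hasSum_of_poisson (hm : 0 ≤ m) (hl : 0 ≤ l) (hX : Measurable X)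
    (hY : Measurable Y) (hXY : IndepFun X Y μ) (hXlaw : μ.map X = poissonRealMeasure m)
    (hYlaw : μ.map Y = poissonRealMeasure l) :
    Integrable (fun ω => |X ω - Y ω|) μ ∧
      HasSum (fun t => poissonCDF m t * (1 - poissonCDF l t) +
        poissonCDF l t * (1 - poissonCDF m t)) (∫ ω, |X ω - Y ω| ∂μ) := by
  set u := fun t => poissonCDF m t * (1 - poissonCDF l t) +
    poissonCDF l t * (1 - poissonCDF m t)
  have hu0 (t : ℕ) : 0 ≤ u t := by
    have := poissonCDF_le_one hm t; have := poissonCDF_le_one hl t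
    have := poissonCDF_nonneg hm t; have := poissonCDF_nonneg hl t
    positivity
  have hu : Summable u := by
    refine .of_nonneg_of_le hu0 (fun t => ?_)
      ((hasSum_one_sub_poissonCDF hl).summable.add (hasSum_one_sub_poissonCDF hm).summable)
    have := poissonCDF_le_one hm t; have := poissonCDF_le_one hl t
    have := poissonCDF_nonneg hm t; have := poissonCDF_nonneg hl t
    simp only [u]
    nlinarith
  have hlint : ∫⁻ ω, ENNReal.ofReal |X ω - Y ω| ∂μ = ENNReal.ofReal (∑' t, u t) := by
    rw [lintegral_abs_sub_of_poisson hm hl hX hY hXY hXlaw hYlaw,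
      ENNReal.ofReal_tsum_of_nonneg hu0 hu]
  have hmeas : AEStronglyMeasurable (fun ω => |X ω - Y ω|) μ := (hX.sub hY).abs.aestronglyMeasurable
  have hnonneg : 0 ≤ᵐ[μ] fun ω => |X ω - Y ω| := ae_of_all _ fun ω => abs_nonneg _
  refine ⟨⟨hmeas, ?_⟩, ?_⟩
  · rw [hasFiniteIntegral_iff_ofReal hnonneg, hlint]
    exact ENNReal.ofReal_lt_top
  · rw [integral_eq_lintegral_of_nonneg_ae hnonneg hmeas, hlint,
      ENNReal.toReal_ofReal (tsum_nonneg hu0)]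
    exact hu.hasSum

lemma hasSum_integral_energy_of_poisson {X' Y' : Ω → ℝ} (hm : 0 ≤ m) (hl : 0 ≤ l)
    (hX : Measurable X) (hX' : Measurable X') (hY : Measurable Y) (hY' : Measurable Y')
    (hXY : IndepFun X Y μ) (hX'Y' : IndepFun X' Y' μ) (hXX' : IndepFun X X' μ)
    (hYY' : IndepFun Y Y' μ)
    (hXlaw : μ.map X = poissonRealMeasure m) (hX'law : μ.map X' = poissonRealMeasure m)
    (hYlaw : μ.map Y = poissonRealMeasure l) (hY'law : μ.map Y' = poissonRealMeasure l) :
    HasSum (fun t => 2 * (poissonCDF m t - poissonCDF l t) ^ 2)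
      (∫ ω, (|X ω - Y ω| + |X' ω - Y' ω| - |X ω - X' ω| - |Y ω - Y' ω|) ∂μ) := by
  obtain ⟨i₁, h₁⟩ := integrable_abs_sub_and_hasSum_of_poisson hm hl hX hY hXY hXlaw hYlaw
  obtain ⟨i₂, h₂⟩ := integrable_abs_sub_and_hasSum_of_poisson hm hl hX' hY' hX'Y' hX'law hY'law
  obtain ⟨i₃, h₃⟩ := integrable_abs_sub_and_hasSum_of_poisson hm hm hX hX' hXX' hXlaw hX'law
  obtain ⟨i₄, h₄⟩ := integrable_abs_sub_and_hasSum_of_poisson hl hl hY hY' hYY' hYlaw hY'law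
  have i₁₂ : Integrable (fun ω => |X ω - Y ω| + |X' ω - Y' ω|) μ := i₁.add i₂
  have i₁₂₃ : Integrable (fun ω => |X ω - Y ω| + |X' ω - Y' ω| - |X ω - X' ω|) μ := i₁₂.sub i₃
  rw [integral_sub i₁₂₃ i₄, integral_sub i₁₂ i₃, integral_add i₁ i₂]
  exact (((h₁.add h₂).sub h₃).sub h₄).congr_fun fun t => by ring

end PoissonLaw

lemma sq_sub_le_mul_tsum_sq {H : ℕ → ℝ} {d B : ℝ} {n₁ n₂ : ℕ} (hH : HasSum H d)
    (habs : Summable fun t => |H t|) (hsq : Summable fun t => H t ^ 2) (hn : n₁ ≤ n₂)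
    (hB : ∑ t ∈ range n₁, |H t| + ∑' k, |H (k + n₂)| ≤ B) (hBd : B ≤ d) :
    (d - B) ^ 2 ≤ ((n₂ : ℝ) - n₁) * ∑' t, H t ^ 2 := by
  have hsplit : ∑ t ∈ range n₁, H t + ∑ t ∈ Ico n₁ n₂, H t + ∑' k, H (k + n₂) = d := by
    rw [sum_range_add_sum_Ico _ hn, ← hH.tsum_eq]
    exact hH.summable.sum_add_tsum_nat_add n₂
  have hleft : ∑ t ∈ range n₁, H t ≤ ∑ t ∈ range n₁, |H t| := sum_le_sum fun t _ => le_abs_self _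
  have hright : ∑' k, H (k + n₂) ≤ ∑' k, |H (k + n₂)| :=
    Summable.tsum_le_tsum (fun k => le_abs_self _) ((summable_nat_add_iff n₂).2 hH.summable)
      ((summable_nat_add_iff n₂).2 habs)
  have hwindow : d - B ≤ ∑ t ∈ Ico n₁ n₂, H t := by linarith
  calc (d - B) ^ 2 ≤ (∑ t ∈ Ico n₁ n₂, H t) ^ 2 := pow_le_pow_left₀ (by linarith) hwindow 2
    _ ≤ #(Ico n₁ n₂) * ∑ t ∈ Ico n₁ n₂, H t ^ 2 := sq_sum_le_card_mul_sum_sq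
    _ ≤ ((n₂ : ℝ) - n₁) * ∑' t, H t ^ 2 := by
      rw [Nat.card_Ico, Nat.cast_sub hn]
      gcongr
      · linarith [(Nat.cast_le (α := ℝ)).2 hn]
      · exact hsq.sum_le_tsum _ fun t _ => sq_nonneg _

section Tails

variable {m l a : ℝ}

lemma abs_poissonCDF_sub_le_add (hm : 0 ≤ m) (hl : 0 ≤ l) (t : ℕ) :
    |poissonCDF m t - poissonCDF l t| ≤ poissonCDF m t + poissonCDF l t := by
  have := poissonCDF_nonneg hm t; have := poissonCDF_nonneg hl t
  exact abs_le.2 ⟨by linarith, by linarith⟩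

lemma abs_poissonCDF_sub_le_one_sub_add (hm : 0 ≤ m) (hl : 0 ≤ l) (t : ℕ) :
    |poissonCDF m t - poissonCDF l t| ≤
      (1 - poissonCDF m t) + (1 - poissonCDF l t) := by
  have := poissonCDF_le_one hm t; have := poissonCDF_le_one hl t
  exact abs_le.2 ⟨by linarith, by linarith⟩

lemma hasSum_poissonCDF_sub (hm : 0 ≤ m) (hl : 0 ≤ l) :
    HasSum (fun t => poissonCDF m t - poissonCDF l t) (l - m) :=
  ((hasSum_one_sub_poissonCDF hl).sub (hasSum_one_sub_poissonCDF hm)).congr_fun fun t => by ring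

lemma summable_abs_poissonCDF_sub (hm : 0 ≤ m) (hl : 0 ≤ l) :
    Summable fun t => |poissonCDF m t - poissonCDF l t| :=
  .of_nonneg_of_le (fun _ => abs_nonneg _) (abs_poissonCDF_sub_le_one_sub_add hm hl)
    ((hasSum_one_sub_poissonCDF hm).summable.add (hasSum_one_sub_poissonCDF hl).summable)

lemma summable_sq_poissonCDF_sub (hm : 0 ≤ m) (hl : 0 ≤ l) :
    Summable fun t => (poissonCDF m t - poissonCDF l t) ^ 2 := by
  refine .of_nonneg_of_le (fun _ => sq_nonneg _) (fun t => ?_) (summable_abs_poissonCDF_sub hm hl)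
  have h₁ : |poissonCDF m t - poissonCDF l t| ≤ 1 :=
    abs_sub_le_of_nonneg_of_le (poissonCDF_nonneg hm t) (poissonCDF_le_one hm t)
      (poissonCDF_nonneg hl t) (poissonCDF_le_one hl t)
  rw [← sq_abs]
  nlinarith [abs_nonneg (poissonCDF m t - poissonCDF l t)]

lemma sum_range_abs_poissonCDF_sub_le (hm : 0 ≤ m) (hml : m ≤ l) (ha : 0 < a) {n : ℕ}
    (hn : n ≤ ⌊m - a⌋₊) :
    ∑ t ∈ range n, |poissonCDF m t - poissonCDF l t| ≤
      27 * (m + 3 * m ^ 2 + (l + 3 * l ^ 2)) / (256 * a ^ 3) := by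
  have hl : 0 ≤ l := hm.trans hml
  rcases eq_or_ne n 0 with rfl | hn₀
  · rw [sum_range_zero]
    positivity
  have hna : (n : ℝ) + a ≤ m := by linarith [(Nat.le_floor_iff' hn₀).1 hn]
  calc ∑ t ∈ range n, |poissonCDF m t - poissonCDF l t|
      ≤ ∑ t ∈ range n, poissonCDF m t + ∑ t ∈ range n, poissonCDF l t := by
        rw [← sum_add_distrib]
        exact sum_le_sum fun t _ => abs_poissonCDF_sub_le_add hm hl t
    _ ≤ 27 * (m + 3 * m ^ 2) / (256 * a ^ 3) + 27 * (l + 3 * l ^ 2) / (256 * a ^ 3) :=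
        add_le_add
          (sum_range_natCDF_le (poissonProb_nonneg hm) (hasSum_poissonProb_mul_sub_pow_four hm)
            ha hna)
          (sum_range_natCDF_le (poissonProb_nonneg hl) (hasSum_poissonProb_mul_sub_pow_four hl)
            ha (by linarith))
    _ = 27 * (m + 3 * m ^ 2 + (l + 3 * l ^ 2)) / (256 * a ^ 3) := by ring

lemma tsum_abs_poissonCDF_sub_add_le (hm : 0 ≤ m) (hml : m ≤ l) (ha : 0 < a) {n : ℕ}
    (hn : l + a ≤ n) :
    ∑' k : ℕ, |poissonCDF m (k + n) - poissonCDF l (k + n)| ≤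
      27 * (m + 3 * m ^ 2 + (l + 3 * l ^ 2)) / (256 * a ^ 3) := by
  have hl : 0 ≤ l := hm.trans hml
  have hsm := (summable_nat_add_iff n).2 (hasSum_one_sub_poissonCDF hm).summable
  have hsl := (summable_nat_add_iff n).2 (hasSum_one_sub_poissonCDF hl).summable
  have hle (k : ℕ) := abs_poissonCDF_sub_le_one_sub_add hm hl (k + n)
  calc ∑' k : ℕ, |poissonCDF m (k + n) - poissonCDF l (k + n)|
      ≤ ∑' k : ℕ, ((1 - poissonCDF m (k + n)) + (1 - poissonCDF l (k + n))) :=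
        Summable.tsum_le_tsum hle (.of_nonneg_of_le (fun _ => abs_nonneg _) hle (hsm.add hsl))
          (hsm.add hsl)
    _ = ∑' k : ℕ, (1 - poissonCDF m (k + n)) +
          ∑' k : ℕ, (1 - poissonCDF l (k + n)) := hsm.tsum_add hsl
    _ ≤ 27 * (m + 3 * m ^ 2) / (256 * a ^ 3) + 27 * (l + 3 * l ^ 2) / (256 * a ^ 3) :=
        add_le_add
          (tsum_one_sub_natCDF_add_le (poissonProb_nonneg hm) (hasSum_poissonProb hm)
            (hasSum_poissonProb_mul_sub_pow_four hm) ha (by linarith))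
          (tsum_one_sub_natCDF_add_le (poissonProb_nonneg hl) (hasSum_poissonProb hl)
            (hasSum_poissonProb_mul_sub_pow_four hl) ha hn)
    _ = 27 * (m + 3 * m ^ 2 + (l + 3 * l ^ 2)) / (256 * a ^ 3) := by ring

end Tails

lemma le_tsum_sq_poissonCDF_sub_of_le {m l : ℝ} (hm : 0 ≤ m) (hml : m ≤ l) (hs : 1 < l + m)
    (hd : √(l + m) ≤ l - m) :
    (l - m) / 10 ≤ ∑' t, (poissonCDF m t - poissonCDF l t) ^ 2 := by
  have hl : 0 ≤ l := hm.trans hml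
  set H := fun t => poissonCDF m t - poissonCDF l t
  set σ := √(l + m)
  have hσ2 : σ ^ 2 = l + m := Real.sq_sqrt (by linarith)
  have hσ1 : 1 < σ := by nlinarith [Real.sqrt_nonneg (l + m)]
  set M := m + 3 * m ^ 2 + (l + 3 * l ^ 2)
  set a := 2 * σ
  have ha : 0 < a := by positivity
  set B := 2 * (27 * M / (256 * a ^ 3))
  have hn : ⌊m - a⌋₊ ≤ ⌈l + a⌉₊ := (Nat.floor_mono (by linarith)).trans (Nat.floor_le_ceil _)
  have hB : ∑ t ∈ range ⌊m - a⌋₊, |H t| + ∑' k, |H (k + ⌈l + a⌉₊)| ≤ B := by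
    have hleft : ∑ t ∈ range ⌊m - a⌋₊, |H t| ≤ 27 * M / (256 * a ^ 3) :=
      sum_range_abs_poissonCDF_sub_le hm hml ha le_rfl
    have hright : ∑' k, |H (k + ⌈l + a⌉₊)| ≤ 27 * M / (256 * a ^ 3) :=
      tsum_abs_poissonCDF_sub_add_le hm hml ha (Nat.le_ceil (l + a))
    linarith
  have hBσ : B ≤ σ / 8 := by
    have hM : M ≤ 4 * σ ^ 4 := by nlinarith [mul_nonneg hm hl]
    calc B = 27 * M / (1024 * σ ^ 3) := by ring
      _ ≤ 27 * (4 * σ ^ 4) / (1024 * σ ^ 3) := by gcongr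
      _ = 27 * σ / 256 := by field_simp; ring
      _ ≤ σ / 8 := by linarith
  have hwidth : (⌈l + a⌉₊ : ℝ) - ⌊m - a⌋₊ ≤ 7 * (l - m) := by
    have := Nat.ceil_lt_add_one (show 0 ≤ l + a by positivity)
    have := Nat.lt_floor_add_one (m - a)
    linarith
  have hCS := sq_sub_le_mul_tsum_sq (hasSum_poissonCDF_sub hm hl)
    (summable_abs_poissonCDF_sub hm hl) (summable_sq_poissonCDF_sub hm hl) hn hB (by linarith)
  have hS : 0 ≤ ∑' t, H t ^ 2 := tsum_nonneg fun t => sq_nonneg _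
  have h₁ : (7 * (l - m) / 8) ^ 2 ≤ (l - m - B) ^ 2 :=
    pow_le_pow_left₀ (by linarith) (by linarith) 2
  nlinarith [mul_le_mul_of_nonneg_right hwidth hS]

lemma abs_sub_div_ten_le_tsum_sq_poissonCDF_sub {m l : ℝ} (hm : 0 ≤ m) (hl : 0 ≤ l)
    (hs : 1 < l + m) (hd : √(l + m) ≤ |l - m|) :
    |l - m| / 10 ≤ ∑' t, (poissonCDF m t - poissonCDF l t) ^ 2 := by
  rcases le_total m l with h | h
  · rw [abs_of_nonneg (sub_nonneg.2 h)] at hd ⊢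
    exact le_tsum_sq_poissonCDF_sub_of_le hm h hs hd
  · rw [abs_of_nonpos (sub_nonpos.2 h), neg_sub] at hd ⊢
    rw [add_comm] at hd hs
    simp_rw [← neg_sub (poissonCDF l _), neg_sq]
    exact le_tsum_sq_poissonCDF_sub_of_le hl h hs hd

end PoissonGap

open PoissonGap in
theorem poisson_expectation_gap_general {Ω : Type*} [MeasurableSpace Ω] (μ : Measure Ω)
    (m l : ℝ) (hm : 0 ≤ m) (hl : 0 ≤ l) (hsum : 1 < l + m) (hdiff : Real.sqrt (l + m) ≤ |l - m|)
    (X X' Y Y' : Ω → ℝ)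
    (hXm : Measurable X) (hX'm : Measurable X') (hYm : Measurable Y) (hY'm : Measurable Y')
    (hindep : iIndepFun ![X, X', Y, Y'] μ)
    (hX : Measure.map X μ = poissonRealMeasure m)
    (hX' : Measure.map X' μ = poissonRealMeasure m)
    (hY : Measure.map Y μ = poissonRealMeasure l)
    (hY' : Measure.map Y' μ = poissonRealMeasure l) :
    ∫ ω, (|X ω - Y ω| + |X' ω - Y' ω| - |X ω - X' ω| - |Y ω - Y' ω|) ∂μ ≥
      (1/5) * |l - m| := by
  have hΔ := hasSum_integral_energy_of_poisson hm hl hXm hX'm hYm hY'm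
    (hindep.indepFun (show (0 : Fin 4) ≠ 2 by decide))
    (hindep.indepFun (show (1 : Fin 4) ≠ 3 by decide))
    (hindep.indepFun (show (0 : Fin 4) ≠ 1 by decide))
    (hindep.indepFun (show (2 : Fin 4) ≠ 3 by decide)) hX hX' hY hY'
  rw [ge_iff_le, ← hΔ.tsum_eq, tsum_mul_left]
  linarith [abs_sub_div_ten_le_tsum_sq_poissonCDF_sub hm hl hsum hdiff]

theorem poisson_expectation_gap {Ω : Type*} [MeasurableSpace Ω] (μ : Measure Ω)
    [IsProbabilityMeasure μ]
    (m l : ℝ) (hm : 0 ≤ m) (hl : 0 ≤ l) (hsum : 1 < l + m) (hdiff : Real.sqrt (l + m) ≤ |l - m|)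
    (X X' Y Y' : Ω → ℝ)
    (hXm : Measurable X) (hX'm : Measurable X') (hYm : Measurable Y) (hY'm : Measurable Y')
    (hindep : iIndepFun ![X, X', Y, Y'] μ)
    (hX : Measure.map X μ = poissonRealMeasure m)
    (hX' : Measure.map X' μ = poissonRealMeasure m)
    (hY : Measure.map Y μ = poissonRealMeasure l)
    (hY' : Measure.map Y' μ = poissonRealMeasure l) :
    ∫ ω, (|X ω - Y ω| + |X' ω - Y' ω| - |X ω - X' ω| - |Y ω - Y' ω|) ∂μ ≥
      (1/5) * |l - m| :=
  poisson_expectation_gap_general μ m l hm hl hsum hdiff X X' Y Y' hXm hX'm hYm hY'm hindep hX hX'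
    hY hY'
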